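/- For t > 0, x ≥ 0, and α ∈ (0,1), the total mass of the measure P_x(B_t^{(α)} ∈ dy, ℓ_t^{(α)} ∈ dℓ) given by the corrected formula equals 1; that is, ∫₀^∞∫_{-∞}^0 2(1-α)(ℓ-y+x)/√(2πt³) e^{-(ℓ-y+x)²/(2t)} dy dℓ + ∫₀^∞∫₀^∞ 2α(ℓ+y+x)/√(2πt³) e^{-(ℓ+y+x)²/(2t)} dy dℓ + ∫₀^∞ (1/√(2πt))[e^{-(y-x)²/(2t)} - e^{-(y+x)²/(2t)}] dy = 1. -/

import Mathlib

/-!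
Substituting `u = ℓ + x ± y` turns both inner integrals into `∫_{u > c} u e^{-u²/2t} du = t e^{-c²/2t}`
with `c = ℓ + x`, so the two double integrals add up to `2 / √(2πt) · ∫_{ℓ > 0} e^{-(ℓ+x)²/2t} dℓ`
whatever `α` is. Together with the atom this is
`(∫_{y > 0} e^{-(y+x)²/2t} dy + ∫_{y > 0} e^{-(y-x)²/2t} dy) / √(2πt)`, and reflecting the second
integral shows that the numerator is the full Gaussian integral `√(2πt)`.
-/

open Real MeasureTheory Filter Set

lemma integrable_exp_neg_sq_div {t : ℝ} (ht : 0 < t) :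
    Integrable (fun u : ℝ => exp (-u ^ 2 / (2 * t))) :=
  (integrable_exp_neg_mul_sq (b := (2 * t)⁻¹) (by positivity)).congr
    (.of_forall fun u => by ring_nf)

lemma integral_exp_neg_sq_div (t : ℝ) :
    ∫ u : ℝ, exp (-u ^ 2 / (2 * t)) = √(2 * π * t) := by
  have h := integral_gaussian (2 * t)⁻¹
  rw [div_inv_eq_mul, ← mul_assoc, mul_comm π] at h
  rw [← h]
  congr 1 with u
  ring_nf

lemma integral_Ioi_exp_neg_add_sq_add_integral_Ioi_exp_neg_sub_sq {t : ℝ} (ht : 0 < t) (x : ℝ) :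
    (∫ y in Ioi 0, exp (-(y + x) ^ 2 / (2 * t))) + ∫ y in Ioi 0, exp (-(y - x) ^ 2 / (2 * t))
      = √(2 * π * t) := by
  have hint : Integrable (fun u : ℝ => exp (-(u + x) ^ 2 / (2 * t))) :=
    (integrable_exp_neg_sq_div ht).comp_add_right x
  have reflect : ∫ y in Ioi 0, exp (-(y - x) ^ 2 / (2 * t))
      = ∫ y in Iic 0, exp (-(y + x) ^ 2 / (2 * t)) := by
    have h := integral_comp_neg_Ioi 0 fun y => exp (-(y + x) ^ 2 / (2 * t))
    rw [neg_zero] at h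
    rw [← h]
    refine setIntegral_congr_fun measurableSet_Ioi fun y _ => ?_
    ring_nf
  rw [reflect, add_comm, intervalIntegral.integral_Iic_add_Ioi hint.integrableOn hint.integrableOn,
    integral_add_right_eq_self (fun u => exp (-u ^ 2 / (2 * t))), integral_exp_neg_sq_div t]

lemma integral_Ioi_add_mul_exp_neg_add_sq_div {t : ℝ} (ht : 0 < t) (c : ℝ) :
    ∫ y in Ioi 0, (c + y) * exp (-(c + y) ^ 2 / (2 * t)) = t * exp (-c ^ 2 / (2 * t)) := by
  have antideriv : ∀ y ∈ Ici (0 : ℝ), HasDerivAt (fun y => -t * exp (-(c + y) ^ 2 / (2 * t)))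
      ((c + y) * exp (-(c + y) ^ 2 / (2 * t))) y := by
    intro y _
    have hexponent : HasDerivAt (fun y => -(c + y) ^ 2 / (2 * t)) (-(c + y) / t) y := by
      refine ((((hasDerivAt_id' y).const_add c).pow 2).neg.div_const (2 * t)).congr_deriv ?_
      field_simp
      ring
    refine (hexponent.exp.const_mul (-t)).congr_deriv ?_
    field_simp
  have hint : IntegrableOn (fun y => (c + y) * exp (-(c + y) ^ 2 / (2 * t))) (Ioi 0) := by
    have h := integrable_mul_exp_neg_mul_sq (b := (2 * t)⁻¹) (by positivity)
    refine ((h.comp_add_left c).congr (.of_forall fun y => ?_)).integrableOn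
    simp only
    ring_nf
  have decay : Tendsto (fun y => -t * exp (-(c + y) ^ 2 / (2 * t))) atTop (nhds 0) := by
    have h : Tendsto (fun y => -(c + y) ^ 2 / (2 * t)) atTop atBot :=
      (tendsto_neg_atBot_iff.mpr ((tendsto_pow_atTop two_ne_zero).comp
        (tendsto_atTop_add_const_left _ c tendsto_id))).atBot_div_const (by positivity)
    simpa using (tendsto_exp_atBot.comp h).const_mul (-t)
  rw [integral_Ioi_of_hasDerivAt_of_tendsto' antideriv hint decay]
  simp

lemma integral_Iic_sub_mul_exp_neg_sub_sq_div {t : ℝ} (ht : 0 < t) (c : ℝ) :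
    ∫ y in Iic 0, (c - y) * exp (-(c - y) ^ 2 / (2 * t)) = t * exp (-c ^ 2 / (2 * t)) := by
  have h := integral_comp_neg_Iic 0 fun y => (c + y) * exp (-(c + y) ^ 2 / (2 * t))
  rw [neg_zero, integral_Ioi_add_mul_exp_neg_add_sq_div ht c] at h
  simpa only [← sub_eq_add_neg] using h

lemma sqrt_two_mul_pi_mul_pow_three {t : ℝ} (ht : 0 ≤ t) :
    √(2 * π * t ^ 3) = t * √(2 * π * t) := by
  rw [show 2 * π * t ^ 3 = t ^ 2 * (2 * π * t) by ring, sqrt_mul (by positivity), sqrt_sq ht]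

lemma integral_Ioi_mul_add_div_mul_exp {t : ℝ} (ht : 0 < t) (a c : ℝ) :
    ∫ y in Ioi 0, a * (c + y) / √(2 * π * t ^ 3) * exp (-(c + y) ^ 2 / (2 * t))
      = a / √(2 * π * t) * exp (-c ^ 2 / (2 * t)) := by
  simp_rw [mul_div_right_comm a, mul_assoc (a / _)]
  rw [integral_const_mul, integral_Ioi_add_mul_exp_neg_add_sq_div ht, sqrt_two_mul_pi_mul_pow_three ht.le]
  field_simp

lemma integral_Iic_mul_sub_div_mul_exp {t : ℝ} (ht : 0 < t) (a c : ℝ) :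
    ∫ y in Iic 0, a * (c - y) / √(2 * π * t ^ 3) * exp (-(c - y) ^ 2 / (2 * t))
      = a / √(2 * π * t) * exp (-c ^ 2 / (2 * t)) := by
  simp_rw [mul_div_right_comm a, mul_assoc (a / _)]
  rw [integral_const_mul, integral_Iic_sub_mul_exp_neg_sub_sq_div ht, sqrt_two_mul_pi_mul_pow_three ht.le]
  field_simp

theorem stmt4_general (t x α : ℝ) (ht : 0 < t) :
    (∫ ℓ in Set.Ioi (0:ℝ), ∫ y in Set.Iic (0:ℝ),
        2 * (1 - α) * (ℓ - y + x) / Real.sqrt (2 * π * t ^ 3) *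
          Real.exp (-(ℓ - y + x) ^ 2 / (2 * t)))
      + (∫ ℓ in Set.Ioi (0:ℝ), ∫ y in Set.Ioi (0:ℝ),
          2 * α * (ℓ + y + x) / Real.sqrt (2 * π * t ^ 3) *
            Real.exp (-(ℓ + y + x) ^ 2 / (2 * t)))
      + (∫ y in Set.Ioi (0:ℝ),
          (1 / Real.sqrt (2 * π * t)) *
            (Real.exp (-(y - x) ^ 2 / (2 * t)) - Real.exp (-(y + x) ^ 2 / (2 * t))))
      = 1 := by
  have hint_sub : IntegrableOn (fun y => exp (-(y - x) ^ 2 / (2 * t))) (Ioi 0) :=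
    ((integrable_exp_neg_sq_div ht).comp_sub_right x).integrableOn
  have hint_add : IntegrableOn (fun y => exp (-(y + x) ^ 2 / (2 * t))) (Ioi 0) :=
    ((integrable_exp_neg_sq_div ht).comp_add_right x).integrableOn
  simp_rw [sub_add_eq_add_sub, add_right_comm _ _ x, integral_Iic_mul_sub_div_mul_exp ht,
    integral_Ioi_mul_add_div_mul_exp ht, integral_const_mul, integral_sub hint_sub hint_add]
  have total := integral_Ioi_exp_neg_add_sq_add_integral_Ioi_exp_neg_sub_sq ht x
  have hS : 0 < √(2 * π * t) := sqrt_pos.mpr (by positivity)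
  generalize ∫ y in Ioi 0, exp (-(y + x) ^ 2 / (2 * t)) = A at *
  generalize ∫ y in Ioi 0, exp (-(y - x) ^ 2 / (2 * t)) = B at *
  field_simp
  linarith

theorem stmt4 (t x α : ℝ) (ht : 0 < t) (hx : 0 ≤ x) (hα : α ∈ Set.Ioo (0:ℝ) 1) :
    (∫ ℓ in Set.Ioi (0:ℝ), ∫ y in Set.Iic (0:ℝ),
        2 * (1 - α) * (ℓ - y + x) / Real.sqrt (2 * π * t ^ 3) *
          Real.exp (-(ℓ - y + x) ^ 2 / (2 * t)))
      + (∫ ℓ in Set.Ioi (0:ℝ), ∫ y in Set.Ioi (0:ℝ),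
          2 * α * (ℓ + y + x) / Real.sqrt (2 * π * t ^ 3) *
            Real.exp (-(ℓ + y + x) ^ 2 / (2 * t)))
      + (∫ y in Set.Ioi (0:ℝ),
          (1 / Real.sqrt (2 * π * t)) *
            (Real.exp (-(y - x) ^ 2 / (2 * t)) - Real.exp (-(y + x) ^ 2 / (2 * t))))
      = 1 :=
  stmt4_general t x α ht
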